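/- arXiv:0803.4049 — 5 statements merged into one kernel-verified Lean document; each statement's English description precedes it below -/
import Mathlib

section
/- In a rooted spanning tree with preorder numbering where each subtree's labels form a contiguous interval, for any non-root vertex u and any target label d, exactly one of the following holds: d lies in the label interval of exactly one child subtree of u, d equals the label of u, or d lies outside the subtree interval of u (in which case the target lies in the direction of u's parent). Consequently, the greedy interval-routing rule (forward to the unique child whose interval contains d, else forward to the parent) is well-defined. -/
/-- `u` is an ancestor of `w` (or equal to it) in the rooted tree given by the
`parent` function. -/
def IsAncestor {V : Type*} (parent : V → V) (u w : V) : Prop :=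
  ∃ n : ℕ, parent^[n] w = u

/-- The subtree rooted at `u`: all vertices of which `u` is an ancestor. -/
def subtreeOf {V : Type*} (parent : V → V) (u : V) : Set V :=
  {w | IsAncestor parent u w}

/-- The maximum preorder label occurring in the subtree rooted at `u`. -/
noncomputable def maxRange {V : Type*} (parent : V → V) (spvc : V → ℕ) (u : V) : ℕ :=
  sSup (spvc '' subtreeOf parent u)

/-- In a rooted spanning tree with preorder interval labeling, for any non-root
vertex `u` and any target label `d`, exactly one of the following holds: `d` lies
in the interval of exactly one child subtree of `u`; `d` equals the label of `u`;
or `d` lies outside the subtree interval of `u`.  Hence greedy interval routing is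
well-defined. -/
theorem stmt_7 {V : Type*} [Fintype V] [DecidableEq V]
    (root : V) (parent : V → V) (spvc : V → ℕ)
    (hroot : parent root = root)
    (hreach : ∀ v, IsAncestor parent root v)
    (hinj : Function.Injective spvc)
    (hmono : ∀ v, v ≠ root → spvc (parent v) < spvc v)
    (hint : ∀ v, spvc '' subtreeOf parent v =
      Set.Icc (spvc v) (maxRange parent spvc v))
    (u : V) (hu : u ≠ root) (d : ℕ) :
    let A : Prop := ∃! c : V, parent c = u ∧ c ≠ u ∧
      d ∈ Set.Icc (spvc c) (maxRange parent spvc c)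
    let B : Prop := d = spvc u
    let C : Prop := d ∉ Set.Icc (spvc u) (maxRange parent spvc u)
    (A ∧ ¬B ∧ ¬C) ∨ (¬A ∧ B ∧ ¬C) ∨ (¬A ∧ ¬B ∧ C) := by
  intro A B C
  -- basic facts
  have hle : ∀ (n : ℕ) (v : V), spvc (parent^[n] v) ≤ spvc v := by
    intro n
    induction n with
    | zero => intro v; simp
    | succ n ih =>
      intro v
      rw [Function.iterate_succ_apply]
      refine (ih (parent v)).trans ?_
      by_cases hv : v = root
      · rw [hv, hroot]
      · exact (hmono v hv).le
  have hself : ∀ v, spvc v ≤ maxRange parent spvc v := by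
    intro v
    have h : spvc v ∈ spvc '' subtreeOf parent v := ⟨v, ⟨0, rfl⟩, rfl⟩
    rw [hint v] at h
    exact h.2
  have hchild_gt : ∀ c, parent c = u → spvc u < spvc c := by
    intro c h
    have hc : c ≠ root := by
      intro hc; rw [hc, hroot] at h; exact hu h.symm
    have := hmono c hc
    rwa [h] at this
  by_cases hC : d ∈ Set.Icc (spvc u) (maxRange parent spvc u)
  · by_cases hB : d = spvc u
    · -- case B
      refine Or.inr (Or.inl ⟨?_, hB, fun h => h hC⟩)
      rintro ⟨c, ⟨hc1, hc2, hc3⟩, -⟩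
      have h1 : spvc c ≤ d := hc3.1
      have h2 : spvc u < spvc c := hchild_gt c hc1
      omega
    · -- case A
      refine Or.inl ⟨?_, hB, fun h => h hC⟩
      have hd : d ∈ spvc '' subtreeOf parent u := by rw [hint u]; exact hC
      obtain ⟨w, hw, hwd⟩ := hd
      have hwne : w ≠ u := by
        intro h; rw [h] at hwd; exact hB hwd.symm
      have hex : ∃ n, parent^[n] w = u := hw
      set n := Nat.find hex with hn
      have hnspec : parent^[n] w = u := Nat.find_spec hex
      have hnpos : 0 < n :=
        Nat.pos_of_ne_zero (fun h => hwne (by rw [h] at hnspec; exact hnspec))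
      set c := parent^[n - 1] w with hc
      have hcp : parent c = u := by
        have h1 : parent (parent^[n - 1] w) = parent^[n - 1 + 1] w :=
          (Function.iterate_succ_apply' parent (n - 1) w).symm
        rw [hc, h1, Nat.sub_add_cancel hnpos, hnspec]
      have hcne : c ≠ u := by
        intro h
        exact Nat.find_min hex (Nat.sub_lt hnpos one_pos) h
      have hwc : w ∈ subtreeOf parent c := ⟨n - 1, rfl⟩
      have hdc : d ∈ Set.Icc (spvc c) (maxRange parent spvc c) := by
        rw [← hint c]; exact ⟨w, hwc, hwd⟩
      -- uniqueness
      have key : ∀ c1 c2 : V, ∀ m k : ℕ, parent c1 = u → parent c2 = u →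
          parent^[m] w = c1 → parent^[k] w = c2 → m ≤ k → c1 = c2 := by
        intro c1 c2 m k hp1 hp2 hm hk hmlek
        have hkk : parent^[k - m + m] w = c2 := by
          rw [Nat.sub_add_cancel hmlek]; exact hk
        rw [Function.iterate_add_apply, hm] at hkk
        rcases Nat.eq_zero_or_pos (k - m) with h0 | hpos
        · rw [h0] at hkk; exact hkk
        · exfalso
          have hkk2 : parent^[(k - m - 1) + 1] c1 = c2 := by
            rwa [Nat.sub_add_cancel hpos]
          rw [Function.iterate_succ_apply, hp1] at hkk2
          have h1 : spvc c2 ≤ spvc u := hkk2 ▸ hle (k - m - 1) u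
          have h2 : spvc u < spvc c2 := hchild_gt c2 hp2
          omega
      refine ⟨c, ⟨hcp, hcne, hdc⟩, ?_⟩
      rintro c' ⟨hc'p, hc'ne, hc'd⟩
      have hd' : d ∈ spvc '' subtreeOf parent c' := by rw [hint c']; exact hc'd
      obtain ⟨w', hw', hwd'⟩ := hd'
      have hww : w' = w := hinj (by rw [hwd', hwd])
      rw [hww] at hw'
      obtain ⟨k, hk⟩ := hw'
      rcases le_total k (n - 1) with h | h
      · exact key c' c k (n - 1) hc'p hcp hk rfl h
      · exact (key c c' (n - 1) k hcp hc'p rfl hk h).symm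
  · -- case C
    refine Or.inr (Or.inr ⟨?_, ?_, hC⟩)
    · rintro ⟨c, ⟨hc1, hc2, hc3⟩, -⟩
      have hd : d ∈ spvc '' subtreeOf parent c := by rw [hint c]; exact hc3
      obtain ⟨w, ⟨m, hm⟩, hwd⟩ := hd
      have : w ∈ subtreeOf parent u :=
        ⟨m + 1, by rw [Function.iterate_succ_apply', hm, hc1]⟩
      have : d ∈ spvc '' subtreeOf parent u := ⟨w, this, hwd⟩
      rw [hint u] at this
      exact hC this
    · intro hB
      exact hC (by rw [hB]; exact ⟨le_refl _, hself u⟩)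
end

section
/- Spanning-path routing is delivery-guaranteed: in a rooted spanning tree with preorder interval labeling, the routing rule 'if the destination label lies in the interval of a child subtree, forward to that child; otherwise forward to the parent' always delivers a packet from any source vertex to any destination vertex in finitely many steps, and the route taken is exactly the unique tree path between source and destination. -/
/-!
Labels strictly increase from a vertex to each of its children, and by the interval property the
label of `t` lies in the interval of `c` exactly when `t` lies in the subtree of `c`. So outside
the subtree containing `t` the packet climbs towards the root, which is an ancestor of `t`; once
inside it, every step enters the child subtree containing `t`, raising the label towards `spvc t`.
Hence `t` is reached, and the orbit up to the first visit of `t` has no repetitions.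
-/

theorem Function.nodup_map_range_iterate_of_forall_lt_ne {α : Type*} {f : α → α} {x y : α}
    {k : ℕ} (hk : f^[k] x = y) (hmin : ∀ j < k, f^[j] x ≠ y) :
    ((List.range (k + 1)).map fun i => f^[i] x).Nodup := by
  -- A repeat `f^[i] x = f^[j] x` would make the orbit visit `y` already at time `k - j + i`.
  have hne : ∀ i j, i < j → j ≤ k → f^[i] x ≠ f^[j] x := by
    intro i j hij hjk heq
    refine hmin (k - j + i) (by omega) ?_
    rw [Function.iterate_add_apply, heq, ← Function.iterate_add_apply, Nat.sub_add_cancel hjk, hk]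
  refine List.nodup_range.map_on fun i hi j hj heq => ?_
  rw [List.mem_range] at hi hj
  rcases lt_trichotomy i j with h | h | h
  · exact absurd heq (hne i j h (by omega))
  · exact h
  · exact absurd heq.symm (hne j i h (by omega))

section Tree

variable {V : Type*} {parent : V → V}

theorem IsAncestor.of_parent_eq {c u t : V} (h : IsAncestor parent c t) (hpc : parent c = u) :
    IsAncestor parent u t := by
  obtain ⟨n, hn⟩ := h
  exact ⟨n + 1, by rw [Function.iterate_succ_apply', hn, hpc]⟩

theorem IsAncestor.exists_child {u t : V} (h : IsAncestor parent u t) (htu : t ≠ u) :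
    ∃ c, parent c = u ∧ c ≠ u ∧ t ∈ subtreeOf parent c := by
  obtain ⟨n, hn⟩ := h
  induction n generalizing u with
  | zero => exact absurd hn htu
  | succ n ih =>
    rw [Function.iterate_succ_apply'] at hn
    by_cases hc : parent^[n] t = u
    · exact ih htu hc
    · exact ⟨parent^[n] t, hn, hc, n, rfl⟩

variable {spvc : V → ℕ} {root : V}

theorem spvc_parent_le (hroot : parent root = root)
    (hmono : ∀ v, v ≠ root → spvc (parent v) < spvc v) (v : V) : spvc (parent v) ≤ spvc v := by
  by_cases hv : v = root
  · rw [hv, hroot]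
  · exact (hmono v hv).le

theorem IsAncestor.spvc_le (hroot : parent root = root)
    (hmono : ∀ v, v ≠ root → spvc (parent v) < spvc v) {u w : V}
    (h : IsAncestor parent u w) : spvc u ≤ spvc w := by
  obtain ⟨n, rfl⟩ := h
  induction n generalizing w with
  | zero => rfl
  | succ n ih =>
    rw [Function.iterate_succ_apply]
    exact ih.trans (spvc_parent_le hroot hmono w)

theorem spvc_lt_of_parent_eq (hroot : parent root = root)
    (hmono : ∀ v, v ≠ root → spvc (parent v) < spvc v) {c u : V} (hpc : parent c = u)
    (hcu : c ≠ u) : spvc u < spvc c := by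
  subst hpc
  exact hmono c fun hc => hcu (hc ▸ hroot.symm)

theorem mem_subtreeOf_iff_spvc_mem_Icc (hinj : Function.Injective spvc)
    (hint : ∀ v, spvc '' subtreeOf parent v = Set.Icc (spvc v) (maxRange parent spvc v))
    {c t : V} : t ∈ subtreeOf parent c ↔ spvc t ∈ Set.Icc (spvc c) (maxRange parent spvc c) := by
  rw [← hint, hinj.mem_set_image]

section Routing

variable {f : V → V} {t : V}

theorem exists_iterate_eq_of_mem_subtreeOf (hroot : parent root = root)
    (hmono : ∀ v, v ≠ root → spvc (parent v) < spvc v)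
    (hdown : ∀ u, t ∈ subtreeOf parent u → u ≠ t →
      parent (f u) = u ∧ f u ≠ u ∧ t ∈ subtreeOf parent (f u))
    {u : V} (hu : t ∈ subtreeOf parent u) : ∃ k, f^[k] u = t := by
  induction hgap : spvc t - spvc u using Nat.strong_induction_on generalizing u with
  | _ N ih =>
    by_cases hut : u = t
    · exact ⟨0, hut⟩
    obtain ⟨hpar, hne, hsub⟩ := hdown u hu hut
    have hlt : spvc u < spvc (f u) := spvc_lt_of_parent_eq hroot hmono hpar hne
    have hle : spvc (f u) ≤ spvc t := IsAncestor.spvc_le hroot hmono hsub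
    obtain ⟨k, hk⟩ := ih _ (by omega) hsub rfl
    exact ⟨k + 1, hk⟩

theorem exists_iterate_eq_of_mem_subtreeOf_iterate (hroot : parent root = root)
    (hmono : ∀ v, v ≠ root → spvc (parent v) < spvc v)
    (hdown : ∀ u, t ∈ subtreeOf parent u → u ≠ t →
      parent (f u) = u ∧ f u ≠ u ∧ t ∈ subtreeOf parent (f u))
    (hup : ∀ u, t ∉ subtreeOf parent u → f u = parent u)
    {m : ℕ} {u : V} (h : t ∈ subtreeOf parent (parent^[m] u)) : ∃ k, f^[k] u = t := by
  induction m generalizing u with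
  | zero => exact exists_iterate_eq_of_mem_subtreeOf hroot hmono hdown h
  | succ m ih =>
    by_cases hu : t ∈ subtreeOf parent u
    · exact exists_iterate_eq_of_mem_subtreeOf hroot hmono hdown hu
    obtain ⟨k, hk⟩ := ih (u := parent u) h
    exact ⟨k + 1, by rw [Function.iterate_succ_apply, hup u hu, hk]⟩

end Routing

def IsIntervalRouting (parent : V → V) (spvc : V → ℕ) (next : V → ℕ → V) : Prop :=
  ∀ u d, (∃ c : V, parent c = u ∧ c ≠ u ∧
      d ∈ Set.Icc (spvc c) (maxRange parent spvc c) ∧ next u d = c) ∨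
    ((¬ ∃ c : V, parent c = u ∧ c ≠ u ∧
      d ∈ Set.Icc (spvc c) (maxRange parent spvc c)) ∧ next u d = parent u)

namespace IsIntervalRouting

variable {next : V → ℕ → V}

theorem next_of_mem (hnext : IsIntervalRouting parent spvc next)
    (hinj : Function.Injective spvc)
    (hint : ∀ v, spvc '' subtreeOf parent v = Set.Icc (spvc v) (maxRange parent spvc v))
    {u t : V} (ht : t ∈ subtreeOf parent u) (hut : u ≠ t) :
    parent (next u (spvc t)) = u ∧ next u (spvc t) ≠ u ∧
      t ∈ subtreeOf parent (next u (spvc t)) := by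
  rcases hnext u (spvc t) with ⟨c, hpc, hcu, hc, rfl⟩ | ⟨hnone, -⟩
  · exact ⟨hpc, hcu, (mem_subtreeOf_iff_spvc_mem_Icc hinj hint).2 hc⟩
  · obtain ⟨c, hpc, hcu, htc⟩ := IsAncestor.exists_child ht (Ne.symm hut)
    exact absurd ⟨c, hpc, hcu, (mem_subtreeOf_iff_spvc_mem_Icc hinj hint).1 htc⟩ hnone

theorem next_of_not_mem (hnext : IsIntervalRouting parent spvc next)
    (hinj : Function.Injective spvc)
    (hint : ∀ v, spvc '' subtreeOf parent v = Set.Icc (spvc v) (maxRange parent spvc v))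
    {u t : V} (ht : t ∉ subtreeOf parent u) : next u (spvc t) = parent u := by
  rcases hnext u (spvc t) with ⟨c, hpc, -, hc, -⟩ | ⟨-, hparent⟩
  · have htc : IsAncestor parent c t := (mem_subtreeOf_iff_spvc_mem_Icc hinj hint).2 hc
    exact absurd (htc.of_parent_eq hpc) ht
  · exact hparent

end IsIntervalRouting

end Tree

theorem stmt_8_general {V : Type*}
    (root : V) (parent : V → V) (spvc : V → ℕ)
    (hroot : parent root = root)
    (hreach : ∀ v, IsAncestor parent root v)
    (hinj : Function.Injective spvc)
    (hmono : ∀ v, v ≠ root → spvc (parent v) < spvc v)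
    (hint : ∀ v, spvc '' subtreeOf parent v =
      Set.Icc (spvc v) (maxRange parent spvc v))
    (next : V → ℕ → V)
    (hnext : ∀ u d, (∃ c : V, parent c = u ∧ c ≠ u ∧
        d ∈ Set.Icc (spvc c) (maxRange parent spvc c) ∧ next u d = c) ∨
      ((¬ ∃ c : V, parent c = u ∧ c ≠ u ∧
        d ∈ Set.Icc (spvc c) (maxRange parent spvc c)) ∧ next u d = parent u))
    (s t : V) :
    ∃ k : ℕ, (fun u => next u (spvc t))^[k] s = t ∧
      (((List.range (k + 1)).map
        (fun i => (fun u => next u (spvc t))^[i] s)).Nodup) := by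
  have hrouting : IsIntervalRouting parent spvc next := hnext
  obtain ⟨m, hm⟩ := hreach s
  have hdelivered : ∃ k, (fun u => next u (spvc t))^[k] s = t :=
    exists_iterate_eq_of_mem_subtreeOf_iterate hroot hmono
      (fun _ hu hut => hrouting.next_of_mem hinj hint hu hut)
      (fun _ hu => hrouting.next_of_not_mem hinj hint hu) (m := m) (hm ▸ hreach t)
  classical
  exact ⟨Nat.find hdelivered, Nat.find_spec hdelivered,
    Function.nodup_map_range_iterate_of_forall_lt_ne (Nat.find_spec hdelivered)
      fun _ hj => Nat.find_min hdelivered hj⟩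

/-- Spanning-path routing is delivery-guaranteed: in a rooted spanning tree with
preorder interval labeling, the rule "forward to the child whose interval contains
the destination label if one exists, otherwise forward to the parent" delivers a
packet from any source `s` to any destination `t` in finitely many steps, and the
visited vertices are pairwise distinct, i.e. the route is the unique simple tree
path from `s` to `t`. -/
theorem stmt_8 {V : Type*} [Fintype V] [DecidableEq V]
    (root : V) (parent : V → V) (spvc : V → ℕ)
    (hroot : parent root = root)
    (hreach : ∀ v, IsAncestor parent root v)
    (hinj : Function.Injective spvc)
    (hmono : ∀ v, v ≠ root → spvc (parent v) < spvc v)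
    (hint : ∀ v, spvc '' subtreeOf parent v =
      Set.Icc (spvc v) (maxRange parent spvc v))
    (next : V → ℕ → V)
    (hnext : ∀ u d, (∃ c : V, parent c = u ∧ c ≠ u ∧
        d ∈ Set.Icc (spvc c) (maxRange parent spvc c) ∧ next u d = c) ∨
      ((¬ ∃ c : V, parent c = u ∧ c ≠ u ∧
        d ∈ Set.Icc (spvc c) (maxRange parent spvc c)) ∧ next u d = parent u))
    (s t : V) :
    ∃ k : ℕ, (fun u => next u (spvc t))^[k] s = t ∧
      (((List.range (k + 1)).map
        (fun i => (fun u => next u (spvc t))^[i] s)).Nodup) :=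
  stmt_8_general root parent spvc hroot hreach hinj hmono hint next hnext s t
end

section
/- The spanning-path routing rule never revisits an edge: the path from source s to destination t produced by interval routing on the spanning tree uses each tree edge at most once (it is a simple path). -/
/-!
While the current vertex `u` is not an ancestor of `t`, interval routing climbs to the parent;
once it is, it descends to the unique child on the tree path to `t`. Since the preorder labelling
gives every vertex a smaller label than its proper descendants, the potential
`-label u` on ancestors of `t` and `label u` elsewhere strictly decreases along the walk until
`t` is reached, so no vertex is visited twice.
-/

namespace IsAncestor

variable {V : Type*} {parent : V → V} {u v w : V}

theorem parent_self (v : V) : IsAncestor parent (parent v) v := ⟨1, rfl⟩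

theorem trans (huv : IsAncestor parent u v) (hvw : IsAncestor parent v w) :
    IsAncestor parent u w := by
  obtain ⟨m, rfl⟩ := huv
  obtain ⟨n, rfl⟩ := hvw
  exact ⟨m + n, Function.iterate_add_apply parent m n w⟩

theorem total_of_common (huw : IsAncestor parent u w) (hvw : IsAncestor parent v w) :
    IsAncestor parent u v ∨ IsAncestor parent v u := by
  obtain ⟨a, rfl⟩ := huw
  obtain ⟨b, rfl⟩ := hvw
  rcases le_total a b with hab | hab
  · exact Or.inr ⟨b - a, by rw [← Function.iterate_add_apply, Nat.sub_add_cancel hab]⟩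
  · exact Or.inl ⟨a - b, by rw [← Function.iterate_add_apply, Nat.sub_add_cancel hab]⟩

theorem parent_right (h : IsAncestor parent u w) (hne : u ≠ w) :
    IsAncestor parent u (parent w) := by
  obtain ⟨_ | n, rfl⟩ := h
  · exact absurd rfl hne
  · exact ⟨n, (Function.iterate_succ_apply parent n w).symm⟩

theorem exists_child_s9 (h : IsAncestor parent u w) (hne : u ≠ w) :
    ∃ c, parent c = u ∧ c ≠ u ∧ IsAncestor parent c w := by
  obtain ⟨n, hn⟩ := h
  induction n with
  | zero => exact absurd hn.symm hne
  | succ n ih =>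
    rw [Function.iterate_succ_apply'] at hn
    by_cases hc : parent^[n] w = u
    · exact ih hc
    · exact ⟨_, hn, hc, n, rfl⟩

end IsAncestor

theorem eq_root_of_parent_eq_self {V : Type*} {parent : V → V} {root u : V}
    (hreach : ∀ v, IsAncestor parent root v) (hu : parent u = u) : u = root := by
  obtain ⟨n, hn⟩ := hreach u
  rwa [Function.iterate_fixed hu] at hn

section PreorderLabelling

variable {V : Type*} {parent : V → V} {spvc : V → ℕ}
  (hint : ∀ v, spvc '' subtreeOf parent v = Set.Icc (spvc v) (maxRange parent spvc v))
include hint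

theorem label_le_of_isAncestor {u w : V} (h : IsAncestor parent u w) : spvc u ≤ spvc w := by
  have hw : spvc w ∈ spvc '' subtreeOf parent u := ⟨w, h, rfl⟩
  exact (hint u ▸ hw).1

variable (hinj : Function.Injective spvc)
include hinj

theorem isAncestor_iff_label_mem {c w : V} :
    IsAncestor parent c w ↔ spvc w ∈ Set.Icc (spvc c) (maxRange parent spvc c) := by
  rw [← hint c]
  exact ⟨fun h => ⟨w, h, rfl⟩, fun ⟨w', hw', hw'w⟩ => hinj hw'w ▸ hw'⟩

theorem label_lt_of_isAncestor {u w : V} (h : IsAncestor parent u w) (hne : u ≠ w) :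
    spvc u < spvc w :=
  (label_le_of_isAncestor hint h).lt_of_ne (hinj.ne hne)

theorem eq_of_isAncestor_of_isAncestor {u v : V} (huv : IsAncestor parent u v)
    (hvu : IsAncestor parent v u) : u = v :=
  hinj (le_antisymm (label_le_of_isAncestor hint huv) (label_le_of_isAncestor hint hvu))

theorem child_eq_of_isAncestor {u c c' w : V} (hc : parent c = u) (hcu : c ≠ u)
    (hc' : parent c' = u) (hc'u : c' ≠ u)
    (hcw : IsAncestor parent c w) (hc'w : IsAncestor parent c' w) : c = c' := by
  wlog hcc' : IsAncestor parent c c' generalizing c c'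
  · exact (this hc' hc'u hc hcu hc'w hcw ((hcw.total_of_common hc'w).resolve_left hcc')).symm
  by_contra hne
  have hcu' : IsAncestor parent c u := hc' ▸ hcc'.parent_right hne
  exact hcu (eq_of_isAncestor_of_isAncestor hint hinj hcu' (hc ▸ IsAncestor.parent_self c))

end PreorderLabelling

open Classical in
noncomputable def routePotential {V : Type*} (parent : V → V) (spvc : V → ℕ) (t u : V) : ℤ :=
  if IsAncestor parent u t then -(spvc u : ℤ) else spvc u

theorem routePotential_le {V : Type*} (parent : V → V) (spvc : V → ℕ) (t u : V) :
    routePotential parent spvc t u ≤ spvc u := by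
  unfold routePotential
  split_ifs <;> omega

section Routing

variable {V : Type*} {parent : V → V} {spvc : V → ℕ} {next : V → ℕ → V}
  (hint : ∀ v, spvc '' subtreeOf parent v = Set.Icc (spvc v) (maxRange parent spvc v))
  (hinj : Function.Injective spvc)
  (hnext : ∀ u d, (∃ c : V, parent c = u ∧ c ≠ u ∧
      d ∈ Set.Icc (spvc c) (maxRange parent spvc c) ∧ next u d = c) ∨
    ((¬ ∃ c : V, parent c = u ∧ c ≠ u ∧
      d ∈ Set.Icc (spvc c) (maxRange parent spvc c)) ∧ next u d = parent u))
include hint hinj hnext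

theorem next_eq_child {u c t : V} (hc : parent c = u) (hcu : c ≠ u)
    (hct : IsAncestor parent c t) : next u (spvc t) = c := by
  rcases hnext u (spvc t) with ⟨c', hc', hc'u, hc't, hnext'⟩ | ⟨hnone, -⟩
  · rw [hnext', child_eq_of_isAncestor hint hinj hc' hc'u hc hcu
      ((isAncestor_iff_label_mem hint hinj).2 hc't) hct]
  · exact absurd ⟨c, hc, hcu, (isAncestor_iff_label_mem hint hinj).1 hct⟩ hnone

theorem next_eq_parent {u t : V} (hut : ¬ IsAncestor parent u t) :
    next u (spvc t) = parent u := by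
  rcases hnext u (spvc t) with ⟨c, hc, -, hct, -⟩ | ⟨-, hnext'⟩
  · exact absurd (hc ▸ (IsAncestor.parent_self c).trans
      ((isAncestor_iff_label_mem hint hinj).2 hct)) hut
  · exact hnext'

theorem routePotential_next_lt {root : V} (hreach : ∀ v, IsAncestor parent root v)
    {t u : V} (hut : u ≠ t) :
    routePotential parent spvc t (next u (spvc t)) < routePotential parent spvc t u := by
  by_cases hanc : IsAncestor parent u t
  · obtain ⟨c, hc, hcu, hct⟩ := hanc.exists_child_s9 hut
    have hlt : spvc u < spvc c :=
      label_lt_of_isAncestor hint hinj (hc ▸ IsAncestor.parent_self c) hcu.symm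
    rw [next_eq_child hint hinj hnext hc hcu hct]
    simp only [routePotential, if_pos hct, if_pos hanc]
    omega
  · have hpu : parent u ≠ u := fun h => hanc (eq_root_of_parent_eq_self hreach h ▸ hreach t)
    have hlt : spvc (parent u) < spvc u :=
      label_lt_of_isAncestor hint hinj (IsAncestor.parent_self u) hpu
    rw [next_eq_parent hint hinj hnext hanc]
    calc routePotential parent spvc t (parent u) ≤ spvc (parent u) := routePotential_le ..
      _ < spvc u := by exact_mod_cast hlt
      _ = routePotential parent spvc t u := by simp only [routePotential, if_neg hanc]

end Routing

theorem nodup_iterate_of_potential_lt {α β : Type*} [Preorder β] (f : α → α) (φ : α → β)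
    (s : α) (k : ℕ) (hφ : ∀ j < k, φ (f (f^[j] s)) < φ (f^[j] s)) :
    ((List.range (k + 1)).map (fun i => f^[i] s)).Nodup := by
  have hanti : StrictAntiOn (fun i => φ (f^[i] s)) (Set.Iic k) :=
    strictAntiOn_Iic_of_succ_lt fun j hj => by
      have hj' := hφ j hj
      rwa [← Function.iterate_succ_apply' f j s] at hj'
  refine List.nodup_range.map_on fun i hi j hj hij => hanti.injOn ?_ ?_ (congrArg φ hij)
  · exact Nat.lt_succ_iff.1 (List.mem_range.1 hi)
  · exact Nat.lt_succ_iff.1 (List.mem_range.1 hj)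

theorem stmt_9_general {V : Type*}
    (root : V) (parent : V → V) (spvc : V → ℕ)
    (hreach : ∀ v, IsAncestor parent root v)
    (hinj : Function.Injective spvc)
    (hint : ∀ v, spvc '' subtreeOf parent v =
      Set.Icc (spvc v) (maxRange parent spvc v))
    (next : V → ℕ → V)
    (hnext : ∀ u d, (∃ c : V, parent c = u ∧ c ≠ u ∧
        d ∈ Set.Icc (spvc c) (maxRange parent spvc c) ∧ next u d = c) ∨
      ((¬ ∃ c : V, parent c = u ∧ c ≠ u ∧
        d ∈ Set.Icc (spvc c) (maxRange parent spvc c)) ∧ next u d = parent u))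
    (s t : V) (k : ℕ)
    (hfirst : ∀ j < k, (fun u => next u (spvc t))^[j] s ≠ t) :
    (((List.range (k + 1)).map
      (fun i => (fun u => next u (spvc t))^[i] s)).Nodup) :=
  nodup_iterate_of_potential_lt _ (routePotential parent spvc t) s k fun j hj =>
    routePotential_next_lt hint hinj hnext hreach (hfirst j hj)

/-- The spanning-path routing rule never revisits a vertex (hence never revisits an
edge): if the route from `s` first reaches the destination `t` after `k` steps,
then the `k + 1` visited vertices are pairwise distinct — the generated walk is a
simple path in the tree. -/
theorem stmt_9 {V : Type*} [Fintype V] [DecidableEq V]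
    (root : V) (parent : V → V) (spvc : V → ℕ)
    (hroot : parent root = root)
    (hreach : ∀ v, IsAncestor parent root v)
    (hinj : Function.Injective spvc)
    (hmono : ∀ v, v ≠ root → spvc (parent v) < spvc v)
    (hint : ∀ v, spvc '' subtreeOf parent v =
      Set.Icc (spvc v) (maxRange parent spvc v))
    (next : V → ℕ → V)
    (hnext : ∀ u d, (∃ c : V, parent c = u ∧ c ≠ u ∧
        d ∈ Set.Icc (spvc c) (maxRange parent spvc c) ∧ next u d = c) ∨
      ((¬ ∃ c : V, parent c = u ∧ c ≠ u ∧
        d ∈ Set.Icc (spvc c) (maxRange parent spvc c)) ∧ next u d = parent u))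
    (s t : V) (k : ℕ)
    (hreacht : (fun u => next u (spvc t))^[k] s = t)
    (hfirst : ∀ j < k, (fun u => next u (spvc t))^[j] s ≠ t) :
    (((List.range (k + 1)).map
      (fun i => (fun u => next u (spvc t))^[i] s)).Nodup) :=
  stmt_9_general root parent spvc hreach hinj hint next hnext s t k hfirst
end

section
/- Let G be a connected graph with cut vertex v separating component C (with at least 3 vertices, none of which are anchors) from all anchors, and suppose C contains two distinct vertices at equal distance from v. Then no matter how many anchors are placed outside C ∪ {v}, the coordinate map is not injective on C. -/
lemma dist_split {V : Type*} (G : SimpleGraph V) (hG : G.Connected)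
    (u w z : V) (hcut : ∀ p : G.Walk u z, w ∈ p.support) :
    G.dist u z = G.dist u w + G.dist w z := by
  classical
  refine le_antisymm (hG.dist_triangle) ?_
  obtain ⟨p, hp⟩ := hG.exists_walk_length_eq_dist u z
  have hw := hcut p
  have hsplit := p.take_spec hw
  have hlen : (p.takeUntil w hw).length + (p.dropUntil w hw).length = p.length := by
    rw [← SimpleGraph.Walk.length_append, hsplit]
  calc G.dist u w + G.dist w z
      ≤ (p.takeUntil w hw).length + (p.dropUntil w hw).length :=
        Nat.add_le_add (SimpleGraph.dist_le _) (SimpleGraph.dist_le _)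
    _ = p.length := hlen
    _ = G.dist u z := hp

/-- If a cut vertex `v` separates a component `C` (with at least 3 vertices, none of
them anchors) from all anchors, and `C` contains two distinct vertices equidistant
from `v`, then no matter how many anchors are placed outside `C ∪ {v}`, the
coordinate map is not injective on `C`. -/
theorem stmt_13 {V : Type*} [Fintype V] [DecidableEq V]
    (G : SimpleGraph V) (hG : G.Connected)
    (C : Set V) (hC : 3 ≤ C.ncard) (v : V) (hv : v ∉ C)
    (k : ℕ) (a : Fin k → V)
    (hout : ∀ i, a i ∉ C ∪ {v})
    (hcut : ∀ u ∈ C, ∀ i : Fin k, ∀ p : G.Walk u (a i), v ∈ p.support)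
    (heq : ∃ x ∈ C, ∃ y ∈ C, x ≠ y ∧ G.dist x v = G.dist y v) :
    ¬ Set.InjOn (fun u : V => fun i : Fin k => G.dist u (a i)) C := by
  obtain ⟨x, hx, y, hy, hxy, hd⟩ := heq
  intro hinj
  apply hxy
  apply hinj hx hy
  funext i
  simp only
  rw [dist_split G hG x v (a i) (hcut x hx i),
      dist_split G hG y v (a i) (hcut y hy i), hd]
end

section
/- In a rooted tree with preorder interval labeling, for any vertex u and destination w with w not in the subtree of u, every step of interval routing from u moves to the parent of u, and the number of such parent steps before reaching the lowest common ancestor of u and w equals depth(u) - depth(lca(u,w)). -/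
/-- In a rooted tree with preorder interval labeling, if the destination `w` is not
in the subtree of `u`, then interval routing from `u` climbs via parents: every
step up to the lowest common ancestor `l` of `u` and `w` moves to the parent, and
the number of parent steps taken to reach `l` is exactly `depth u - depth l`. -/
theorem stmt_15 {V : Type*} [Fintype V] [DecidableEq V]
    (root : V) (parent : V → V) (spvc : V → ℕ)
    (hroot : parent root = root)
    (hreach : ∀ v, IsAncestor parent root v)
    (hinj : Function.Injective spvc)
    (hmono : ∀ v, v ≠ root → spvc (parent v) < spvc v)
    (hint : ∀ v, spvc '' subtreeOf parent v =
      Set.Icc (spvc v) (maxRange parent spvc v))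
    (next : V → ℕ → V)
    (hnext : ∀ u d, (∃ c : V, parent c = u ∧ c ≠ u ∧
        d ∈ Set.Icc (spvc c) (maxRange parent spvc c) ∧ next u d = c) ∨
      ((¬ ∃ c : V, parent c = u ∧ c ≠ u ∧
        d ∈ Set.Icc (spvc c) (maxRange parent spvc c)) ∧ next u d = parent u))
    (depth : V → ℕ)
    (hdepth : ∀ v, parent^[depth v] v = root ∧ ∀ m < depth v, parent^[m] v ≠ root)
    (u w l : V)
    (hw : w ∉ subtreeOf parent u)
    (hl : IsAncestor parent l u ∧ IsAncestor parent l w ∧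
      ∀ z : V, IsAncestor parent z u → IsAncestor parent z w →
        IsAncestor parent z l) :
    (∀ i < depth u - depth l,
        next ((fun a => next a (spvc w))^[i] u) (spvc w) =
          parent ((fun a => next a (spvc w))^[i] u)) ∧
      (∀ i ≤ depth u - depth l, (fun a => next a (spvc w))^[i] u = parent^[i] u) ∧
      parent^[depth u - depth l] u = l := by
  obtain ⟨hl_u, hl_w, hl_max⟩ := hl
  have hrootiter : ∀ n, parent^[n] root = root := by
    intro n; induction n with
    | zero => rfl
    | succ n ih => rw [Function.iterate_succ_apply', ih, hroot]
  have hdepth_root : depth root = 0 := by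
    by_contra h
    exact (hdepth root).2 0 (Nat.pos_of_ne_zero h) rfl
  have hdepth_iter : ∀ (v : V) (n : ℕ), n ≤ depth v →
      depth (parent^[n] v) = depth v - n := by
    intro v n hn
    have h1 : parent^[depth v - n] (parent^[n] v) = root := by
      rw [← Function.iterate_add_apply, Nat.sub_add_cancel hn]
      exact (hdepth v).1
    have h2 : ∀ m < depth v - n, parent^[m] (parent^[n] v) ≠ root := by
      intro m hm
      rw [← Function.iterate_add_apply]
      exact (hdepth v).2 (m + n) (by omega)
    have hle : depth (parent^[n] v) ≤ depth v - n := by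
      by_contra h
      exact (hdepth _).2 _ (by omega) h1
    have hge : depth v - n ≤ depth (parent^[n] v) := by
      by_contra h
      exact h2 _ (by omega) (hdepth _).1
    omega
  have hanc : ∀ a b : V, IsAncestor parent a b →
      depth a ≤ depth b ∧ parent^[depth b - depth a] b = a := by
    rintro a b ⟨n, hn⟩
    by_cases hcase : n ≤ depth b
    · have hd : depth a = depth b - n := by rw [← hn]; exact hdepth_iter b n hcase
      refine ⟨by omega, ?_⟩
      have heq : depth b - depth a = n := by omega
      rw [heq, hn]
    · have hnr : parent^[n] b = root := by
        have heq : n = (n - depth b) + depth b := by omega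
        rw [heq, Function.iterate_add_apply, (hdepth b).1, hrootiter]
      have ha : a = root := by rw [← hn, hnr]
      subst ha
      rw [hdepth_root]
      exact ⟨by omega, by simpa using (hdepth b).1⟩
  set k := depth u - depth l with hk
  obtain ⟨hle_lu, hkl⟩ := hanc l u hl_u
  have hsub_trans : ∀ c x : V, parent c = x →
      subtreeOf parent c ⊆ subtreeOf parent x := by
    rintro c x hc y ⟨n, hn⟩
    exact ⟨n + 1, by rw [Function.iterate_succ_apply', hn, hc]⟩
  have hmem_iff : ∀ (x y : V), y ∈ subtreeOf parent x ↔
      spvc y ∈ Set.Icc (spvc x) (maxRange parent spvc x) := by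
    intro x y
    constructor
    · intro hy
      rw [← hint x]; exact ⟨y, hy, rfl⟩
    · intro hy
      rw [← hint x] at hy
      obtain ⟨z, hz, hzy⟩ := hy
      rwa [← hinj hzy]
  have hnotin : ∀ i < k, w ∉ subtreeOf parent (parent^[i] u) := by
    intro i hi hw'
    set x := parent^[i] u with hx
    have hxu : IsAncestor parent x u := ⟨i, rfl⟩
    have hxl : IsAncestor parent x l := hl_max x hxu hw'
    have hlx : IsAncestor parent l x := by
      refine ⟨k - i, ?_⟩
      rw [hx, ← Function.iterate_add_apply, show k - i + i = k by omega]
      exact hkl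
    have h1 := (hanc x l hxl).1
    have h2 := (hanc l x hlx).1
    have hdx : depth x = depth u - i := hdepth_iter u i (by omega)
    omega
  have hstep : ∀ x : V, w ∉ subtreeOf parent x → next x (spvc w) = parent x := by
    intro x hwx
    rcases hnext x (spvc w) with ⟨c, hc, hcx, hcd, hne⟩ | ⟨_, hne⟩
    · exact absurd (hsub_trans c x hc ((hmem_iff c w).mpr hcd)) hwx
    · exact hne
  have hiter : ∀ i ≤ k, (fun a => next a (spvc w))^[i] u = parent^[i] u := by
    intro i hi
    induction i with
    | zero => rfl
    | succ n ih =>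
      rw [Function.iterate_succ_apply', Function.iterate_succ_apply',
        ih (by omega)]
      exact hstep _ (hnotin n (by omega))
  refine ⟨?_, hiter, hkl⟩
  intro i hi
  rw [hiter i (le_of_lt hi)]
  exact hstep _ (hnotin i hi)
end
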